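/- There exists a universal constant C > 0 such that for every n ≥ 2 and every B ≥ 1, the critical Erdős–Rényi random graph G(n,1/n) satisfies E[ (1/n) Σ_{x ∈ [n]} ( diam(C(x)) ∧ (B n^{1/3}) )² ] ≤ C B n^{1/3}; equivalently, E[ E_S[ ( diam(S₁) ∧ (B n^{1/3}) )² ] ] ≤ C B n^{1/3}. -/

import Mathlib

open MeasureTheory Filter
open scoped ENNReal

/-- The Erdős–Rényi `G(n, 1/n)` measure on edge configurations of `K_n`:
each potential edge is retained (`true`) independently with probability `1/n`. -/
noncomputable def erMeasure (n : ℕ) : Measure (Sym2 (Fin n) → Bool) :=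
  Measure.pi fun _ => (PMF.bernoulli (min (n : ℝ≥0∞)⁻¹ 1).toNNReal
    (by simpa using ENNReal.toNNReal_mono ENNReal.one_ne_top (min_le_right ((n : ℝ≥0∞)⁻¹) 1))).toMeasure

instance (n : ℕ) : IsProbabilityMeasure (erMeasure n) := by
  unfold erMeasure; infer_instance

/-- The simple graph on `Fin n` determined by an edge configuration. -/
def graphOf {n : ℕ} (ω : Sym2 (Fin n) → Bool) : SimpleGraph (Fin n) where
  Adj u v := u ≠ v ∧ ω s(u, v) = true
  symm := by
    constructor
    intro u v h
    exact ⟨Ne.symm h.1, by rw [Sym2.eq_swap]; exact h.2⟩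
  loopless := by
    constructor
    intro u h
    exact h.1 rfl

/-- Size of the connected component of `v`. -/
noncomputable def compSize {n : ℕ} (G : SimpleGraph (Fin n)) (v : Fin n) : ℕ :=
  Nat.card {w : Fin n | G.Reachable v w}

/-- Diameter of a finite graph: maximal distance between two vertices. -/
noncomputable def gdiam {n : ℕ} (G : SimpleGraph (Fin n)) : ℕ :=
  Finset.univ.sup fun p : Fin n × Fin n => G.dist p.1 p.2

open scoped Classical in
/-- Diameter of the connected component of `x`. -/
noncomputable def compDiam {n : ℕ} (G : SimpleGraph (Fin n)) (x : Fin n) : ℕ :=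
  Finset.univ.sup fun p : Fin n × Fin n =>
    if G.Reachable x p.1 ∧ G.Reachable x p.2 then G.dist p.1 p.2 else 0

/-- Product of the weights of the edges of `T`. -/
noncomputable def treeWeight {n : ℕ} (w : Sym2 (Fin n) → ℝ) (T : SimpleGraph (Fin n)) : ℝ :=
  letI : Fintype T.edgeSet := Fintype.ofFinite _
  ∏ e ∈ T.edgeSet.toFinset, w e

open scoped Classical in
/-- Probability that the `w`-weighted uniform spanning tree of `K_n` lies in `E`. -/
noncomputable def ustProb {n : ℕ} (w : Sym2 (Fin n) → ℝ) (E : Set (SimpleGraph (Fin n))) : ℝ :=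
  (∑ T ∈ Finset.univ.filter (fun T : SimpleGraph (Fin n) => T.IsTree ∧ T ∈ E), treeWeight w T) /
    (∑ T ∈ Finset.univ.filter (fun T : SimpleGraph (Fin n) => T.IsTree), treeWeight w T)

/-- The random weights: heavy edges get weight `n^(1+γ)`, the others weight `1`. -/
noncomputable def weightFn (n : ℕ) (γ : ℝ) (ω : Sym2 (Fin n) → Bool) (e : Sym2 (Fin n)) : ℝ :=
  if ω e then (n : ℝ) ^ ((1 : ℝ) + γ) else 1

/-! Let `q_s(x, A)` be the probability that `G(n, 1/n)` has a path of length at least `s` from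
`x` avoiding `A`. Such a path starts with an open edge `xy`, `y ∉ A ∪ {x}`, followed by a path of
length at least `s - 1` from `y` avoiding `A ∪ {x}`. These later events only see edges off
`A ∪ {x}`, so the edges at `x` are independent of them, and with `N` the number of such `y`,
Jensen's inequality for `E[(1 - 1/n)^N]` gives `q_{s+1} ≤ 1 - exp(-b)` where
`b = -log(1 - 1/n) · E N ≤ (1/(n - 1)) · (n - 1) · max q_s`. Induction then yields
`q_s ≤ 4/(s + 4)` uniformly in `n`, `x`, `A`. A component of diameter at least `s` contains a path
of length at least `s/2` from `x`, so `P(diam C(x) ≥ s) ≤ 8/s`, and summing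
`(2s - 1) P(diam C(x) ≥ s)` over `s ≤ ⌈M⌉` gives `E[min(diam C(x), M)²] ≤ 32 M` for every `x`
and every `M ≥ 1`. -/

lemma Fintype.sum_eq_sum_of_involutive {α : Type*} [Fintype α] {σ : α → α}
    (hσ : Function.Involutive σ) {f g : α → ℝ} (h : ∀ a, f a + f (σ a) = g a + g (σ a)) :
    ∑ a, f a = ∑ a, g a := by
  have key : ∀ φ : α → ℝ, ∑ a, (φ a + φ (σ a)) = 2 * ∑ a, φ a := fun φ => by
    rw [Finset.sum_add_distrib, show ∑ a, φ (σ a) = ∑ a, φ a from Equiv.sum_comp (hσ.toPerm σ) φ]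
    ring
  linarith [key f, key g, Fintype.sum_congr _ _ h]

noncomputable section

namespace ProdBernoulli

open Finset Function

variable {ι κ : Type*} [Fintype ι] {p : ℝ}

def boolWeight (p : ℝ) (b : Bool) : ℝ := if b then p else 1 - p

def weight (p : ℝ) (ω : ι → Bool) : ℝ := ∏ i, boolWeight p (ω i)

def expect [DecidableEq ι] (p : ℝ) (f : (ι → Bool) → ℝ) : ℝ := ∑ ω, weight p ω * f ω

def prob [DecidableEq ι] (p : ℝ) (E : Set (ι → Bool)) : ℝ := expect p (E.indicator 1)

lemma boolWeight_nonneg (hp0 : 0 ≤ p) (hp1 : p ≤ 1) (b : Bool) : 0 ≤ boolWeight p b := by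
  cases b <;> simp [boolWeight] <;> linarith

lemma weight_nonneg (hp0 : 0 ≤ p) (hp1 : p ≤ 1) (ω : ι → Bool) : 0 ≤ weight p ω :=
  prod_nonneg fun _ _ => boolWeight_nonneg hp0 hp1 _

variable [DecidableEq ι]

lemma sum_weight (p : ℝ) : ∑ ω : ι → Bool, weight p ω = 1 :=
  calc ∑ ω : ι → Bool, weight p ω = ∏ _i : ι, ∑ b, boolWeight p b :=
        (Fintype.prod_sum fun _ b => boolWeight p b).symm
    _ = 1 := by simp [boolWeight]

lemma expect_const (p c : ℝ) : expect p (fun _ : ι → Bool => c) = c := by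
  rw [expect, ← sum_mul, sum_weight, one_mul]

lemma expect_sub (p : ℝ) (f g : (ι → Bool) → ℝ) :
    expect p (fun ω => f ω - g ω) = expect p f - expect p g := by
  simp only [expect, mul_sub, sum_sub_distrib]

lemma expect_const_mul (p c : ℝ) (f : (ι → Bool) → ℝ) :
    expect p (fun ω => c * f ω) = c * expect p f := by
  simp only [expect, mul_sum, mul_left_comm]

lemma expect_mul_const (p c : ℝ) (f : (ι → Bool) → ℝ) :
    expect p (fun ω => f ω * c) = expect p f * c := by
  simp only [expect, sum_mul, mul_assoc]

lemma expect_sum (p : ℝ) (S : Finset κ) (f : κ → (ι → Bool) → ℝ) :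
    expect p (fun ω => ∑ k ∈ S, f k ω) = ∑ k ∈ S, expect p (f k) := by
  simp only [expect, mul_sum]
  exact sum_comm

lemma expect_mono (hp0 : 0 ≤ p) (hp1 : p ≤ 1) {f g : (ι → Bool) → ℝ} (h : ∀ ω, f ω ≤ g ω) :
    expect p f ≤ expect p g :=
  sum_le_sum fun ω _ => mul_le_mul_of_nonneg_left (h ω) (weight_nonneg hp0 hp1 ω)

lemma prob_nonneg (hp0 : 0 ≤ p) (hp1 : p ≤ 1) (E : Set (ι → Bool)) : 0 ≤ prob p E :=
  (expect_const p 0).symm.trans_le <|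
    expect_mono hp0 hp1 fun ω => Set.indicator_nonneg (fun _ _ => zero_le_one) ω

lemma prob_le_one (hp0 : 0 ≤ p) (hp1 : p ≤ 1) (E : Set (ι → Bool)) : prob p E ≤ 1 :=
  (expect_mono hp0 hp1 fun ω => Set.indicator_le_self' (fun _ _ => zero_le_one) ω).trans_eq <|
    expect_const p 1

lemma prob_mono (hp0 : 0 ≤ p) (hp1 : p ≤ 1) {E F : Set (ι → Bool)} (h : E ⊆ F) :
    prob p E ≤ prob p F :=
  expect_mono hp0 hp1 (Set.indicator_le_indicator_of_subset h fun _ => zero_le_one)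

lemma exp_expect_le (hp0 : 0 ≤ p) (hp1 : p ≤ 1) (X : (ι → Bool) → ℝ) :
    Real.exp (expect p X) ≤ expect p (fun ω => Real.exp (X ω)) :=
  convexOn_exp.map_sum_le (fun ω _ => weight_nonneg hp0 hp1 ω) (sum_weight p) (by simp)

lemma weight_update (p : ℝ) (ω : ι → Bool) (i : ι) (b : Bool) :
    weight p (update ω i b) = boolWeight p b * ∏ j ∈ univ.erase i, boolWeight p (ω j) := by
  rw [weight, ← mul_prod_erase _ _ (mem_univ i), update_self]
  congr 1
  exact prod_congr rfl fun j hj => by rw [update_of_ne (ne_of_mem_erase hj)]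

lemma expect_eval_eq (p : ℝ) (i : ι) (H : (ι → Bool) → Bool → ℝ)
    (hH : ∀ ω b b', H (update ω i b') b = H ω b) :
    expect p (fun ω => H ω (ω i)) = expect p (fun ω => p * H ω true + (1 - p) * H ω false) := by
  -- pair each configuration with the one flipped at `i`
  refine Fintype.sum_eq_sum_of_involutive (σ := fun ω => update ω i (!ω i)) (fun _ => by simp)
    fun ω => ?_
  have hω : weight p ω = weight p (update ω i (ω i)) := by rw [update_eq_self]
  simp only [hω, weight_update, hH, update_self]
  cases ω i <;> simp [boolWeight] <;> ring

lemma expect_mul_prod_eval_eq (p : ℝ) {e : κ → ι} (he : Injective e)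
    (g : κ → (ι → Bool) → Bool → ℝ) (S : Finset κ)
    (hg : ∀ k ∈ S, ∀ j ∈ S, ∀ ω b b', g k (update ω (e j) b') b = g k ω b)
    (F : (ι → Bool) → ℝ) (hF : ∀ j ∈ S, ∀ ω b', F (update ω (e j) b') = F ω) :
    expect p (fun ω => F ω * ∏ k ∈ S, g k ω (ω (e k))) =
      expect p (fun ω => F ω * ∏ k ∈ S, (p * g k ω true + (1 - p) * g k ω false)) := by
  classical
  induction S using Finset.induction_on generalizing F with
  | empty => rfl
  | @insert j S hj ih =>
    have hg' : ∀ k ∈ S, ∀ l ∈ S, ∀ ω b b', g k (update ω (e l) b') b = g k ω b :=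
      fun k hk l hl => hg k (mem_insert_of_mem hk) l (mem_insert_of_mem hl)
    have hFj : ∀ k ∈ S, ∀ ω b',
        F (update ω (e k) b') * g j (update ω (e k) b') (update ω (e k) b' (e j)) =
          F ω * g j ω (ω (e j)) := fun k hk ω b' => by
      have hkj : e j ≠ e k := he.ne fun h => hj (h ▸ hk)
      rw [hF k (mem_insert_of_mem hk), hg j (mem_insert_self j S) k (mem_insert_of_mem hk),
        update_of_ne hkj]
    calc expect p (fun ω => F ω * ∏ k ∈ insert j S, g k ω (ω (e k)))
        = expect p (fun ω => F ω * g j ω (ω (e j)) * ∏ k ∈ S, g k ω (ω (e k))) := by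
          simp only [prod_insert hj, mul_assoc]
      _ = expect p (fun ω => F ω * g j ω (ω (e j)) *
            ∏ k ∈ S, (p * g k ω true + (1 - p) * g k ω false)) := ih hg' _ hFj
      _ = expect p (fun ω =>
            p * (F ω * g j ω true * ∏ k ∈ S, (p * g k ω true + (1 - p) * g k ω false)) +
            (1 - p) * (F ω * g j ω false * ∏ k ∈ S, (p * g k ω true + (1 - p) * g k ω false))) :=
          expect_eval_eq p (e j)
            (fun ω b => F ω * g j ω b * ∏ k ∈ S, (p * g k ω true + (1 - p) * g k ω false))
            fun ω b b' => by
              have hj := mem_insert_self j S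
              simp only [hF j hj, hg j hj j hj]
              congr 1
              exact prod_congr rfl fun k hk => by
                simp only [hg k (mem_insert_of_mem hk) j hj]
      _ = expect p (fun ω =>
            F ω * ∏ k ∈ insert j S, (p * g k ω true + (1 - p) * g k ω false)) := by
          simp only [prod_insert hj]
          congr 1; ext ω; ring

open scoped Classical in
lemma prob_exists_eq (p : ℝ) {e : κ → ι} (he : Injective e)
    (f : κ → (ι → Bool) → Prop) (S : Finset κ)
    (hf : ∀ k ∈ S, ∀ j ∈ S, ∀ ω b, f k (update ω (e j) b) ↔ f k ω) :
    prob p {ω | ∃ k ∈ S, ω (e k) = true ∧ f k ω} =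
      1 - expect p (fun ω => (1 - p) ^ #{k ∈ S | f k ω}) := by
  let g : κ → (ι → Bool) → Bool → ℝ := fun k ω b => if b = true ∧ f k ω then 0 else 1
  have hind : ∀ ω, Set.indicator {ω | ∃ k ∈ S, ω (e k) = true ∧ f k ω} 1 ω =
      1 - 1 * ∏ k ∈ S, g k ω (ω (e k)) := fun ω => by
    by_cases h : ∃ k ∈ S, ω (e k) = true ∧ f k ω
    · obtain ⟨k, hk, hkω⟩ := h
      rw [Set.indicator_of_mem (show ω ∈ {ω | ∃ k ∈ S, ω (e k) = true ∧ f k ω} from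
          ⟨k, hk, hkω⟩), prod_eq_zero hk (show g k ω (ω (e k)) = 0 from if_pos hkω)]
      simp
    · simp only [not_exists, not_and] at h
      rw [Set.indicator_of_notMem (by simpa using h), prod_eq_one fun k hk => if_neg ?_]
      · simp
      · exact fun hkω => h k hk hkω.1 hkω.2
  have hbar : ∀ ω, ∏ k ∈ S, (p * g k ω true + (1 - p) * g k ω false) =
      (1 - p) ^ #{k ∈ S | f k ω} := fun ω => by
    have hk : ∀ k, p * g k ω true + (1 - p) * g k ω false = if f k ω then 1 - p else 1 := by
      intro k
      by_cases h : f k ω <;> simp [g, h]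
    rw [prod_congr rfl fun k _ => hk k, prod_ite, prod_const_one, mul_one, prod_const]
  rw [prob, funext hind, expect_sub, expect_const,
    expect_mul_prod_eval_eq p he g S (fun k hk j hj ω b b' => by simp only [g, hf k hk j hj])
      (fun _ => 1) fun _ _ _ _ => rfl]
  simp only [one_mul, hbar]

open scoped Classical in
lemma expect_card_filter (p : ℝ) (S : Finset κ) (f : κ → (ι → Bool) → Prop) :
    expect p (fun ω => (#{k ∈ S | f k ω} : ℝ)) = ∑ k ∈ S, prob p {ω | f k ω} := by
  simp only [natCast_card_filter, expect_sum, prob]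
  rfl

open scoped Classical in
lemma prob_exists_le (hp0 : 0 ≤ p) (hp1 : p < 1) {e : κ → ι} (he : Injective e)
    (f : κ → (ι → Bool) → Prop) (S : Finset κ)
    (hf : ∀ k ∈ S, ∀ j ∈ S, ∀ ω b, f k (update ω (e j) b) ↔ f k ω) :
    prob p {ω | ∃ k ∈ S, ω (e k) = true ∧ f k ω} ≤
      1 - Real.exp (Real.log (1 - p) * ∑ k ∈ S, prob p {ω | f k ω}) := by
  have hpow : ∀ N : ℕ, (1 - p) ^ N = Real.exp (N * Real.log (1 - p)) := fun N => by
    rw [Real.exp_nat_mul, Real.exp_log (by linarith)]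
  rw [prob_exists_eq p he f S hf, ← expect_card_filter, mul_comm, ← expect_mul_const]
  simp only [hpow]
  linarith [exp_expect_le hp0 hp1.le fun ω => (#{k ∈ S | f k ω} : ℝ) * Real.log (1 - p)]

lemma sum_range_odd_ite_lt (d K : ℕ) :
    ∑ s ∈ range K, (if s < d then (2 * s + 1 : ℝ) else 0) = ((min d K : ℕ) : ℝ) ^ 2 := by
  induction K with
  | zero => simp
  | succ K ih =>
    rw [sum_range_succ, ih]
    split_ifs with h
    · rw [min_eq_right h.le, min_eq_right h]; push_cast; ring
    · rw [min_eq_left (not_lt.1 h), min_eq_left (by omega)]; ring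

lemma expect_min_sq_le (hp0 : 0 ≤ p) (hp1 : p ≤ 1) (D : (ι → Bool) → ℕ) {c M : ℝ}
    (hc : ∀ s : ℕ, prob p {ω | s + 1 ≤ D ω} ≤ c / (s + 1)) (hM : 1 ≤ M) :
    expect p (fun ω => min (D ω : ℝ) M ^ 2) ≤ 4 * c * M := by
  set K := ⌈M⌉₊
  have hc0 : 0 ≤ c := by simpa using (prob_nonneg hp0 hp1 _).trans (hc 0)
  have hpoint : ∀ ω, min (D ω : ℝ) M ^ 2 ≤
      ∑ s ∈ range K, (2 * s + 1 : ℝ) * Set.indicator {ω | s + 1 ≤ D ω} 1 ω := fun ω => by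
    have hmin : min (D ω : ℝ) M ≤ ((min (D ω) K : ℕ) : ℝ) := by
      push_cast
      exact min_le_min_left _ (Nat.le_ceil M)
    calc min (D ω : ℝ) M ^ 2 ≤ ((min (D ω) K : ℕ) : ℝ) ^ 2 :=
          pow_le_pow_left₀ (le_min (by positivity) (by linarith)) hmin 2
      _ = _ := by
        rw [← sum_range_odd_ite_lt]
        refine sum_congr rfl fun s _ => ?_
        by_cases h : s < D ω <;> simp [h]
  have hterm : ∀ s : ℕ, (2 * s + 1 : ℝ) * prob p {ω | s + 1 ≤ D ω} ≤ 2 * c := fun s => by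
    have hs : (0 : ℝ) < s + 1 := by positivity
    calc (2 * s + 1 : ℝ) * prob p {ω | s + 1 ≤ D ω} ≤ (2 * s + 1) * (c / (s + 1)) := by
          gcongr; exact hc s
      _ ≤ 2 * c := by
          rw [mul_div_assoc', div_le_iff₀ hs]; nlinarith
  calc expect p (fun ω => min (D ω : ℝ) M ^ 2)
      ≤ expect p (fun ω =>
          ∑ s ∈ range K, (2 * s + 1 : ℝ) * Set.indicator {ω | s + 1 ≤ D ω} 1 ω) :=
        expect_mono hp0 hp1 hpoint
    _ = ∑ s ∈ range K, (2 * s + 1 : ℝ) * prob p {ω | s + 1 ≤ D ω} := by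
        rw [expect_sum]
        exact sum_congr rfl fun s _ => expect_const_mul p _ _
    _ ≤ ∑ _s ∈ range K, 2 * c := sum_le_sum fun s _ => hterm s
    _ = 2 * c * K := by simp [mul_comm]
    _ ≤ 4 * c * M := by
        have := Nat.ceil_lt_add_one (zero_le_one.trans hM)
        nlinarith

lemma integral_pi_bernoulli (q : NNReal) (hq : q ≤ 1) (f : (ι → Bool) → ℝ) :
    ∫ ω, f ω ∂Measure.pi (fun _ : ι => (PMF.bernoulli q hq).toMeasure) = expect q f := by
  rw [integral_fintype Integrable.of_finite]
  refine sum_congr rfl fun ω _ => ?_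
  rw [smul_eq_mul, Measure.real, Measure.pi_singleton, ENNReal.toReal_prod]
  congr 1
  refine prod_congr rfl fun i _ => ?_
  rw [PMF.toMeasure_apply_singleton _ _ (measurableSet_singleton _), PMF.bernoulli_apply]
  cases ω i <;>
    simp [boolWeight, ENNReal.toReal_sub_of_le (ENNReal.coe_le_one_iff.2 hq) ENNReal.one_ne_top]

end ProdBernoulli

end

namespace SimpleGraph

variable {V : Type*} {G G' : SimpleGraph V} {A : Set V} {x z : V} {s t : ℕ}

def HasAvoidingPath (G : SimpleGraph V) (A : Set V) (x : V) (s : ℕ) : Prop :=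
  ∃ z, ∃ w : G.Walk x z, w.IsPath ∧ s ≤ w.length ∧ ∀ v ∈ w.support, v ∉ A

lemma HasAvoidingPath.mono (hts : t ≤ s) (h : G.HasAvoidingPath A x s) :
    G.HasAvoidingPath A x t :=
  let ⟨z, w, hw, hs, hA⟩ := h
  ⟨z, w, hw, hts.trans hs, hA⟩

lemma HasAvoidingPath.mono_graph (hGG' : ∀ u v, u ∉ A → v ∉ A → G.Adj u v → G'.Adj u v)
    (h : G.HasAvoidingPath A x s) : G'.HasAvoidingPath A x s := by
  obtain ⟨z, w, hw, hs, hA⟩ := h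
  have hedges : ∀ e ∈ w.edges, e ∈ G'.edgeSet := fun e he => by
    induction e using Sym2.ind with
    | _ u v =>
      exact hGG' u v (hA u (w.fst_mem_support_of_mem_edges he))
        (hA v (w.snd_mem_support_of_mem_edges he)) (w.adj_of_mem_edges he)
  exact ⟨z, w.transfer G' hedges, hw.transfer hedges, by simpa using hs, by simpa using hA⟩

lemma HasAvoidingPath.exists_adj (h : G.HasAvoidingPath A x (s + 1)) :
    ∃ y, G.Adj x y ∧ y ∉ insert x A ∧ G.HasAvoidingPath (insert x A) y s := by
  obtain ⟨z, w, hw, hs, hA⟩ := h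
  cases w with
  | nil => simp at hs
  | @cons _ y _ hxy w' =>
    rw [Walk.cons_isPath_iff] at hw
    have hA' : ∀ v ∈ w'.support, v ∉ insert x A := fun v hv hvA =>
      (Set.mem_insert_iff.1 hvA).elim (fun hvx => hw.2 (hvx ▸ hv))
        (hA v (by simp [hv]))
    exact ⟨y, hxy, hA' y w'.start_mem_support, z, w', hw.1, by simpa using hs, hA'⟩

lemma Reachable.hasAvoidingPath_dist (h : G.Reachable x z) :
    G.HasAvoidingPath ∅ x (G.dist x z) := by
  obtain ⟨w, hw, hl⟩ := h.exists_path_of_dist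
  exact ⟨z, w, hw, hl.ge, fun _ _ => Set.notMem_empty _⟩

end SimpleGraph

open scoped Classical in
lemma hasAvoidingPath_half_compDiam {n : ℕ} (G : SimpleGraph (Fin n)) (x : Fin n) :
    G.HasAvoidingPath ∅ x (compDiam G x / 2) := by
  unfold compDiam
  obtain ⟨p, -, hp⟩ := Finset.exists_mem_eq_sup Finset.univ ⟨(x, x), Finset.mem_univ _⟩
    fun p : Fin n × Fin n => if G.Reachable x p.1 ∧ G.Reachable x p.2 then G.dist p.1 p.2 else 0
  rw [hp]
  split_ifs with hr
  · have := hr.1.symm.dist_triangle_left p.2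
    rw [SimpleGraph.dist_comm (u := p.1) (v := x)] at this
    rcases le_total (G.dist x p.1) (G.dist x p.2) with h | h
    · exact hr.2.hasAvoidingPath_dist.mono (by omega)
    · exact hr.1.hasAvoidingPath_dist.mono (by omega)
  · exact (SimpleGraph.Reachable.refl x).hasAvoidingPath_dist.mono (by simp)

noncomputable section ErdosRenyi

open Finset Function ProdBernoulli SimpleGraph

variable {n : ℕ}

lemma integral_erMeasure (hn : 1 ≤ n) (f : (Sym2 (Fin n) → Bool) → ℝ) :
    ∫ ω, f ω ∂erMeasure n = expect (n : ℝ)⁻¹ f := by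
  refine (integral_pi_bernoulli _ _ f).trans ?_
  have : (n : ℝ≥0∞)⁻¹ ≤ 1 := ENNReal.inv_le_one.2 (by exact_mod_cast hn)
  simp [min_eq_left this]

def avoidingPathProb (n s : ℕ) (x : Fin n) (A : Set (Fin n)) : ℝ :=
  prob (n : ℝ)⁻¹ {ω : Sym2 (Fin n) → Bool | (graphOf ω).HasAvoidingPath A x s}

lemma hasAvoidingPath_graphOf_update {A : Set (Fin n)} {e : Sym2 (Fin n)} {v : Fin n}
    (hv : v ∈ e) (hvA : v ∈ A) (ω : Sym2 (Fin n) → Bool) (b : Bool) (y : Fin n) (s : ℕ) :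
    (graphOf (update ω e b)).HasAvoidingPath A y s ↔ (graphOf ω).HasAvoidingPath A y s := by
  have hne : ∀ u w, u ∉ A → w ∉ A → s(u, w) ≠ e := by
    rintro u w hu hw rfl
    rcases Sym2.mem_iff.1 hv with rfl | rfl
    exacts [hu hvA, hw hvA]
  constructor <;> refine HasAvoidingPath.mono_graph fun u w hu hw huw => ⟨huw.1, ?_⟩
  · simpa [update_of_ne (hne u w hu hw)] using huw.2
  · simpa [update_of_ne (hne u w hu hw)] using huw.2

open scoped Classical in
lemma avoidingPathProb_succ_le (hn : 2 ≤ n) (s : ℕ) (x : Fin n) (A : Set (Fin n)) :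
    avoidingPathProb n (s + 1) x A ≤
      1 - Real.exp (Real.log (1 - (n : ℝ)⁻¹) *
        ∑ y ∈ univ.filter (· ∉ insert x A), avoidingPathProb n s y (insert x A)) := by
  have hn' : (2 : ℝ) ≤ n := by exact_mod_cast hn
  have hp1 : (n : ℝ)⁻¹ < 1 := inv_lt_one_of_one_lt₀ (by linarith)
  have hsub : {ω : Sym2 (Fin n) → Bool | (graphOf ω).HasAvoidingPath A x (s + 1)} ⊆
      {ω | ∃ y ∈ univ.filter (· ∉ insert x A), ω s(x, y) = true ∧
        (graphOf ω).HasAvoidingPath (insert x A) y s} := fun ω h => by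
    obtain ⟨y, hxy, hy, hpath⟩ := h.exists_adj
    exact ⟨y, by simpa using hy, hxy.2, hpath⟩
  refine (prob_mono (by positivity) hp1.le hsub).trans <|
    prob_exists_le (by positivity) hp1 (fun _ _ => Sym2.congr_right.1) _ _ ?_
  intro y _ y' _ ω b
  exact hasAvoidingPath_graphOf_update (Sym2.mem_mk_left x y') (Set.mem_insert x A) ω b y s

-- `1 - e^{-b} ≤ b - b²/4`, and `b - b²/4` is increasing for `b ≤ 2`
lemma one_sub_exp_neg_le {b t : ℝ} (ht : 0 ≤ t) (hb : b ≤ 4 / (t + 4)) :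
    1 - Real.exp (-b) ≤ 4 / (t + 5) := by
  have hu1 : 4 / (t + 4) ≤ 1 := (div_le_one (by linarith)).2 (by linarith)
  have hexp : (1 - b / 2) ^ 2 ≤ Real.exp (-b) := by
    calc (1 - b / 2) ^ 2 ≤ Real.exp (-(b / 2)) ^ 2 := by
          gcongr
          · linarith
          · linarith [Real.add_one_le_exp (-(b / 2))]
      _ = Real.exp (-b) := by rw [← Real.exp_nat_mul]; ring_nf
  have hu : 4 / (t + 4) - (4 / (t + 4)) ^ 2 / 4 ≤ 4 / (t + 5) := by
    rw [div_pow, show (4 : ℝ) / (t + 4) - 4 ^ 2 / (t + 4) ^ 2 / 4 = 4 * (t + 3) / (t + 4) ^ 2 by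
        field_simp; ring,
      div_le_div_iff₀ (by positivity) (by linarith)]
    nlinarith
  nlinarith

lemma avoidingPathProb_le (hn : 2 ≤ n) (s : ℕ) (x : Fin n) (A : Set (Fin n)) :
    avoidingPathProb n s x A ≤ 4 / (s + 4) := by
  classical
  have hn' : (2 : ℝ) ≤ n := by exact_mod_cast hn
  have hp1 : (n : ℝ)⁻¹ ≤ 1 := inv_le_one_of_one_le₀ (by linarith)
  induction s generalizing x A with
  | zero => exact (prob_le_one (by positivity) hp1 _).trans_eq (by simp)
  | succ s ih =>
    set Y := univ.filter (· ∉ insert x A)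
    set a := ∑ y ∈ Y, avoidingPathProb n s y (insert x A)
    set κ := -Real.log (1 - (n : ℝ)⁻¹)
    have hY : (#Y : ℝ) ≤ n - 1 := by
      have : #Y ≤ n - 1 := by
        simpa using card_le_card (show Y ⊆ univ.erase x by intro y; simp [Y]; tauto)
      have := (Nat.cast_le (α := ℝ)).2 this
      rwa [Nat.cast_sub (by omega), Nat.cast_one] at this
    have ha0 : 0 ≤ a := sum_nonneg fun y _ => prob_nonneg (by positivity) hp1 _
    have ha : a ≤ (n - 1) * (4 / (s + 4)) :=
      (sum_le_card_nsmul Y _ _ fun y _ => ih y _).trans <| by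
        rw [nsmul_eq_mul]; gcongr
    have hκ0 : 0 ≤ κ := neg_nonneg.2 <| Real.log_nonpos (by simp [hp1]) (by simp)
    have hn1 : (0 : ℝ) < n - 1 := by linarith
    have hp1' : 0 < 1 - (n : ℝ)⁻¹ := by
      rw [sub_pos]; exact inv_lt_one_of_one_lt₀ (by linarith)
    have hκ : κ ≤ 1 / (n - 1) := by
      have hlog := Real.one_sub_inv_le_log_of_pos hp1'
      have : (1 - (n : ℝ)⁻¹)⁻¹ - 1 = 1 / (n - 1) := by
        field_simp
        ring
      linarith
    have hb : κ * a ≤ 4 / (s + 4) :=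
      calc κ * a ≤ 1 / (n - 1) * ((n - 1) * (4 / (s + 4))) := by gcongr
        _ = 4 / (s + 4) := by field_simp
    refine (avoidingPathProb_succ_le hn s x A).trans ?_
    rw [show Real.log (1 - (n : ℝ)⁻¹) * a = -(κ * a) by ring]
    exact (one_sub_exp_neg_le s.cast_nonneg hb).trans_eq (by push_cast; ring)

lemma prob_compDiam_ge_le (hn : 2 ≤ n) (x : Fin n) (s : ℕ) :
    prob (n : ℝ)⁻¹ {ω | s + 1 ≤ compDiam (graphOf ω) x} ≤ 8 / (s + 1) := by
  have hp1 : (n : ℝ)⁻¹ ≤ 1 := inv_le_one_of_one_le₀ (by exact_mod_cast (by omega : 1 ≤ n))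
  have hpath : {ω | s + 1 ≤ compDiam (graphOf ω) x} ⊆
      {ω | (graphOf ω).HasAvoidingPath ∅ x ((s + 1) / 2)} := fun ω h =>
    (hasAvoidingPath_half_compDiam _ x).mono (Nat.div_le_div_right h)
  have hhalf : (s : ℝ) ≤ 2 * ((s + 1) / 2 : ℕ) := by
    exact_mod_cast (by omega : s ≤ 2 * ((s + 1) / 2))
  refine (prob_mono (by positivity) hp1 hpath).trans <| (avoidingPathProb_le hn _ x ∅).trans ?_
  rw [div_le_div_iff₀ (by positivity) (by positivity)]
  linarith

lemma expect_min_compDiam_sq_le (hn : 2 ≤ n) (x : Fin n) {M : ℝ} (hM : 1 ≤ M) :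
    expect (n : ℝ)⁻¹ (fun ω => min (compDiam (graphOf ω) x : ℝ) M ^ 2) ≤ 32 * M := by
  have hn1 : (1 : ℝ) ≤ n := by exact_mod_cast (by omega : 1 ≤ n)
  linarith [expect_min_sq_le (by positivity) (inv_le_one_of_one_le₀ hn1)
    (fun ω => compDiam (graphOf ω) x) (prob_compDiam_ge_le hn x) hM]

end ErdosRenyi

/-- There is a universal constant `C > 0` such that for every `n ≥ 2`
and every `B ≥ 1`, the critical Erdős–Rényi graph `G(n, 1/n)` satisfies
`E[ (1/n) Σ_{x ∈ [n]} ( diam(C(x)) ∧ (B n^{1/3}) )² ] ≤ C B n^{1/3}`, i.e.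
`E[ E_S[ ( diam(S₁) ∧ (B n^{1/3}) )² ] ] ≤ C B n^{1/3}`. -/
theorem size_biased_diam_second_moment :
    ∃ C > (0 : ℝ), ∀ n : ℕ, 2 ≤ n → ∀ B : ℝ, 1 ≤ B →
      (∫ ω, (1 / (n : ℝ)) * ∑ x : Fin n,
          (min (compDiam (graphOf ω) x : ℝ) (B * (n : ℝ) ^ ((1 : ℝ) / 3))) ^ 2 ∂ erMeasure n)
        ≤ C * B * (n : ℝ) ^ ((1 : ℝ) / 3) := by
  refine ⟨32, by norm_num, fun n hn B hB => ?_⟩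
  have hn1 : (1 : ℝ) ≤ n := by exact_mod_cast (by omega : 1 ≤ n)
  set M := B * (n : ℝ) ^ ((1 : ℝ) / 3)
  have hM : 1 ≤ M := one_le_mul_of_one_le_of_one_le hB (Real.one_le_rpow hn1 (by norm_num))
  rw [integral_erMeasure (by omega), ProdBernoulli.expect_const_mul, ProdBernoulli.expect_sum]
  calc 1 / (n : ℝ) * ∑ x : Fin n,
          ProdBernoulli.expect (n : ℝ)⁻¹ (fun ω => min (compDiam (graphOf ω) x : ℝ) M ^ 2)
      ≤ 1 / (n : ℝ) * ∑ _x : Fin n, 32 * M := by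
        gcongr with x; exact expect_min_compDiam_sq_le hn x hM
    _ = 32 * B * (n : ℝ) ^ ((1 : ℝ) / 3) := by
        rw [Finset.sum_const, Finset.card_univ, Fintype.card_fin, nsmul_eq_mul]
        field_simp
        ring
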